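/- Assume hypothesis (H2). Then for every η ∈ X ∖ {□,⊞} one has Φ(η, {□,⊞}) − H(η) ≤ V*. -/

import Mathlib

open scoped Classical

variable {X : Type*}

/-- `ω` (restricted to 0,…,L) is a path of allowed moves from `a` to `b`. -/
def IsPathW (rel : X → X → Prop) (a b : X) (L : ℕ) (ω : ℕ → X) : Prop :=
  ω 0 = a ∧ ω L = b ∧ ∀ i < L, rel (ω i) (ω (i + 1))

/-- The maximal energy along the path `ω = (ω 0, …, ω L)`. -/
noncomputable def pathMax (H : X → ℝ) (L : ℕ) (ω : ℕ → X) : ℝ :=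
  (Finset.range (L + 1)).sup' Finset.nonempty_range_add_one fun i => H (ω i)

/-- Communication height Φ(a,b) between two configurations. -/
noncomputable def commH (rel : X → X → Prop) (H : X → ℝ) (a b : X) : ℝ :=
  sInf { m : ℝ | ∃ L ω, IsPathW rel a b L ω ∧ m = pathMax H L ω }

/-- Communication height Φ(A,B) between two sets of configurations. -/
noncomputable def commHS (rel : X → X → Prop) (H : X → ℝ) (A B : Set X) : ℝ :=
  sInf { m : ℝ | ∃ a ∈ A, ∃ b ∈ B, m = commH rel H a b }

/-- The graph (X,∼) is connected. -/
def ConnGraph (rel : X → X → Prop) : Prop :=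
  ∀ a b : X, ∃ L ω, IsPathW rel a b L ω

/-!
A state `η ∉ {□,⊞}` has, by (H2), a state `ξ` of strictly lower energy reachable from `η`
without climbing more than `V*` above `H η`. Iterating, the energy strictly decreases, so on a
finite space the descent must end in `{□,⊞}`; every later leg starts below `H η`, hence also
stays below `H η + V*`, and `Φ(a,b) ≤ max (Φ(a,c)) (Φ(c,b))` glues the legs together.
-/

namespace IsPathW

variable {rel : X → X → Prop}

def concat (L₁ : ℕ) (ω₁ ω₂ : ℕ → X) : ℕ → X :=
  fun i => if i ≤ L₁ then ω₁ i else ω₂ (i - L₁)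

theorem append {a b c : X} {L₁ L₂ : ℕ} {ω₁ ω₂ : ℕ → X}
    (h₁ : IsPathW rel a c L₁ ω₁) (h₂ : IsPathW rel c b L₂ ω₂) :
    IsPathW rel a b (L₁ + L₂) (concat L₁ ω₁ ω₂) := by
  obtain ⟨h₁0, h₁L, h₁step⟩ := h₁
  obtain ⟨h₂0, h₂L, h₂step⟩ := h₂
  refine ⟨by simp [concat, h₁0], ?_, fun i hi => ?_⟩
  · rcases Nat.eq_zero_or_pos L₂ with rfl | hL₂
    · simp [concat, h₁L, ← h₂0, h₂L]
    · simp [concat, show ¬L₁ + L₂ ≤ L₁ by omega, h₂L]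
  · unfold concat
    rcases lt_trichotomy i L₁ with hlt | rfl | hgt
    · simpa [hlt.le, Nat.succ_le_of_lt hlt] using h₁step i hlt
    · simpa [h₁L, ← h₂0] using h₂step 0 (by omega)
    · simpa [hgt.not_ge, show ¬i + 1 ≤ L₁ by omega, show i + 1 - L₁ = i - L₁ + 1 by omega]
        using h₂step (i - L₁) (by omega)

end IsPathW

section Energy

variable (rel : X → X → Prop) (H : X → ℝ)

theorem pathMax_mem_range (L : ℕ) (ω : ℕ → X) : pathMax H L ω ∈ Set.range H := by
  obtain ⟨i, -, hi⟩ := Finset.exists_mem_eq_sup' Finset.nonempty_range_add_one fun i => H (ω i)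
  exact ⟨ω i, hi.symm⟩

theorem pathMax_concat_le (L₁ L₂ : ℕ) (ω₁ ω₂ : ℕ → X) :
    pathMax H (L₁ + L₂) (IsPathW.concat L₁ ω₁ ω₂) ≤ max (pathMax H L₁ ω₁) (pathMax H L₂ ω₂) := by
  refine Finset.sup'_le _ _ fun i hi => ?_
  rw [Finset.mem_range] at hi
  unfold IsPathW.concat
  split_ifs with h
  · exact le_max_of_le_left (Finset.le_sup' (fun j => H (ω₁ j)) (by simp; omega))
  · exact le_max_of_le_right (Finset.le_sup' (fun j => H (ω₂ j)) (by simp; omega))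

variable [Finite X]

theorem finite_pathMax_set (a b : X) :
    {m : ℝ | ∃ L ω, IsPathW rel a b L ω ∧ m = pathMax H L ω}.Finite := by
  refine (Set.finite_range H).subset ?_
  rintro m ⟨L, ω, -, rfl⟩
  exact pathMax_mem_range H L ω

theorem commH_le_pathMax {a b : X} {L : ℕ} {ω : ℕ → X} (hω : IsPathW rel a b L ω) :
    commH rel H a b ≤ pathMax H L ω :=
  csInf_le (finite_pathMax_set rel H a b).bddBelow ⟨L, ω, hω, rfl⟩

theorem exists_isPathW_commH_eq (hconn : ConnGraph rel) (a b : X) :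
    ∃ L ω, IsPathW rel a b L ω ∧ commH rel H a b = pathMax H L ω := by
  obtain ⟨L, ω, hω⟩ := hconn a b
  exact Set.Nonempty.csInf_mem (s := {m | ∃ L ω, IsPathW rel a b L ω ∧ m = pathMax H L ω})
    ⟨_, L, ω, hω, rfl⟩ (finite_pathMax_set rel H a b)

theorem commH_le_max (hconn : ConnGraph rel) (a c b : X) :
    commH rel H a b ≤ max (commH rel H a c) (commH rel H c b) := by
  obtain ⟨L₁, ω₁, hω₁, h₁⟩ := exists_isPathW_commH_eq rel H hconn a c
  obtain ⟨L₂, ω₂, hω₂, h₂⟩ := exists_isPathW_commH_eq rel H hconn c b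
  rw [h₁, h₂]
  exact (commH_le_pathMax rel H (hω₁.append hω₂)).trans (pathMax_concat_le H L₁ L₂ ω₁ ω₂)

theorem finite_commH_set (A B : Set X) :
    {m : ℝ | ∃ a ∈ A, ∃ b ∈ B, m = commH rel H a b}.Finite := by
  refine (Set.finite_range fun p : X × X => commH rel H p.1 p.2).subset ?_
  rintro m ⟨a, -, b, -, rfl⟩
  exact ⟨(a, b), rfl⟩

theorem commHS_le_commH {A B : Set X} {a b : X} (ha : a ∈ A) (hb : b ∈ B) :
    commHS rel H A B ≤ commH rel H a b :=
  csInf_le (finite_commH_set rel H A B).bddBelow ⟨a, ha, b, hb, rfl⟩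

theorem exists_commHS_singleton_eq (η : X) {B : Set X} (hB : B.Nonempty) :
    ∃ b ∈ B, commHS rel H {η} B = commH rel H η b := by
  obtain ⟨b₀, hb₀⟩ := hB
  obtain ⟨a, rfl, b, hb, he⟩ :=
    Set.Nonempty.csInf_mem (s := {m | ∃ a ∈ ({η} : Set X), ∃ b ∈ B, m = commH rel H a b})
      ⟨_, η, rfl, b₀, hb₀, rfl⟩ (finite_commH_set rel H {η} B)
  exact ⟨b, hb, he⟩

theorem commHS_singleton_le_of_descent (hconn : ConnGraph rel) {B : Set X} (hB : B.Nonempty)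
    {V : ℝ} (hdesc : ∀ η ∉ B, ∃ ξ, H ξ < H η ∧ commH rel H η ξ ≤ H η + V) :
    ∀ η ∉ B, commHS rel H {η} B ≤ H η + V := by
  intro η
  induction η using (Finite.wellFounded_of_trans_of_irrefl (InvImage (· < ·) H)).induction with
  | _ η ih =>
  intro hη
  obtain ⟨ξ, hξη, hηξ⟩ := hdesc η hη
  by_cases hξ : ξ ∈ B
  · exact (commHS_le_commH rel H (Set.mem_singleton η) hξ).trans hηξ
  obtain ⟨b, hb, hξb⟩ := exists_commHS_singleton_eq rel H ξ hB
  have hξb_le : commH rel H ξ b ≤ H η + V := by linarith [ih ξ hξη hξ]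
  calc commHS rel H {η} B ≤ commH rel H η b := commHS_le_commH rel H (Set.mem_singleton η) hb
    _ ≤ max (commH rel H η ξ) (commH rel H ξ b) := commH_le_max rel H hconn η ξ b
    _ ≤ H η + V := max_le hηξ hξb_le

end Energy

theorem stmt_8_general [Fintype X] (rel : X → X → Prop) (H : X → ℝ)
    (hconn : ConnGraph rel)
    (sq bx : X)
    (Vs : ℝ)
    -- (H2): V_η ≤ V* for all η ∉ {□,⊞}
    (hH2 : ∀ η : X, η ≠ sq → η ≠ bx →
      ({ξ : X | H ξ < H η}).Nonempty ∧
      commHS rel H {η} {ξ : X | H ξ < H η} - H η ≤ Vs) :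
    ∀ η : X, η ≠ sq → η ≠ bx →
      commHS rel H {η} {sq, bx} - H η ≤ Vs := by
  have hdesc : ∀ η ∉ ({sq, bx} : Set X), ∃ ξ, H ξ < H η ∧ commH rel H η ξ ≤ H η + Vs := by
    intro η hη
    simp only [Set.mem_insert_iff, Set.mem_singleton_iff, not_or] at hη
    obtain ⟨hlower, hV⟩ := hH2 η hη.1 hη.2
    obtain ⟨ξ, hξ, he⟩ := exists_commHS_singleton_eq rel H η hlower
    exact ⟨ξ, hξ, by linarith⟩
  intro η hsq hbx
  have := commHS_singleton_le_of_descent rel H hconn ⟨sq, by simp⟩ hdesc η (by simp [hsq, hbx])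
  linarith

/-- under (H2), every η ∈ X ∖ {□,⊞} satisfies
Φ(η, {□,⊞}) − H(η) ≤ V*. -/
theorem stmt_8 [Fintype X] (rel : X → X → Prop) (H : X → ℝ)
    (hsymm : Symmetric rel) (hconn : ConnGraph rel)
    (sq bx : X) (hne : sq ≠ bx) (Hsq : H sq = 0)
    (Vs : ℝ) (hVs : Vs < commH rel H sq bx - H sq)
    -- (H2): V_η ≤ V* for all η ∉ {□,⊞}
    (hH2 : ∀ η : X, η ≠ sq → η ≠ bx →
      ({ξ : X | H ξ < H η}).Nonempty ∧
      commHS rel H {η} {ξ : X | H ξ < H η} - H η ≤ Vs) :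
    ∀ η : X, η ≠ sq → η ≠ bx →
      commHS rel H {η} {sq, bx} - H η ≤ Vs :=
  stmt_8_general rel H hconn sq bx Vs hH2
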